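/- arXiv:2204.01927 — 3 statements merged into one kernel-verified Lean document; each statement's English description precedes it below -/
import Mathlib

section
/- Let f : ℝ → ℝ be differentiable, and define the first divided difference f^{[1]}(x,y) = (f(x)−f(y))/(x−y) for x ≠ y and f^{[1]}(x,x) = f'(x). For Hermitian matrices A = Σᵢ λᵢ Pᵢ and B = Σⱼ μⱼ Qⱼ, the perturbation formula holds: f(A) − f(B) = Σᵢ Σⱼ f^{[1]}(λᵢ, μⱼ) Pᵢ (A − B) Qⱼ, i.e., f(A) − f(B) = T_{A,B,f^{[1]}}(A − B). -/
open Matrix BigOperators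

/-! Since the `Pᵢ` are orthogonal idempotents, `Pᵢ A = λᵢ Pᵢ` and `B Qⱼ = μⱼ Qⱼ`, so
`Pᵢ (A - B) Qⱼ = (λᵢ - μⱼ) Pᵢ Qⱼ`. Moreover `f^{[1]}(x, y) (x - y) = f x - f y` for all `x, y`
(on the diagonal both sides vanish). Summing over `i, j` and using `∑ Pᵢ = ∑ Qⱼ = 1` gives
`f(A) - f(B)`. -/

section OrthogonalIdempotents

variable {ι κ R A : Type*} [Fintype ι] [Fintype κ] [DecidableEq ι] [DecidableEq κ]
  [CommRing R] [Ring A] [Algebra R A] {P : ι → A} {Q : κ → A}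

theorem mul_sum_smul_of_orthogonal (hP : ∀ i k, P i * P k = if i = k then P i else 0)
    (c : ι → R) (i : ι) : P i * ∑ k, c k • P k = c i • P i := by
  simp_rw [Finset.mul_sum, mul_smul_comm, hP, smul_ite, smul_zero, Finset.sum_ite_eq,
    Finset.mem_univ, if_true]

theorem sum_smul_mul_of_orthogonal (hQ : ∀ k j, Q k * Q j = if k = j then Q k else 0)
    (c : κ → R) (j : κ) : (∑ k, c k • Q k) * Q j = c j • Q j := by
  simp_rw [Finset.sum_mul, smul_mul_assoc, hQ, smul_ite, smul_zero, Finset.sum_ite_eq',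
    Finset.mem_univ, if_true]

theorem mul_sub_mul_of_orthogonal (hP : ∀ i k, P i * P k = if i = k then P i else 0)
    (hQ : ∀ k j, Q k * Q j = if k = j then Q k else 0) (a : ι → R) (b : κ → R) (i : ι) (j : κ) :
    P i * (∑ k, a k • P k - ∑ l, b l • Q l) * Q j = (a i - b j) • (P i * Q j) := by
  rw [mul_sub, sub_mul, mul_sum_smul_of_orthogonal hP, mul_assoc, sum_smul_mul_of_orthogonal hQ,
    smul_mul_assoc, mul_smul_comm, sub_smul]

end OrthogonalIdempotents

theorem sum_sum_sub_smul_mul_of_sum_eq_one {ι κ R A : Type*} [Fintype ι] [Fintype κ]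
    [CommRing R] [Ring A] [Algebra R A] {P : ι → A} {Q : κ → A}
    (hP : ∑ i, P i = 1) (hQ : ∑ j, Q j = 1) (a : ι → R) (b : κ → R) :
    ∑ i, ∑ j, (a i - b j) • (P i * Q j) = ∑ i, a i • P i - ∑ j, b j • Q j := by
  simp_rw [sub_smul, Finset.sum_sub_distrib]
  congr 1
  · simp_rw [← Finset.smul_sum, ← Finset.mul_sum, hQ, mul_one]
  · rw [Finset.sum_comm]
    simp_rw [← Finset.smul_sum, ← Finset.sum_mul, hP, one_mul]

section RankOneProjections

variable {m R : Type*} [Fintype m] [CommRing R] [StarRing R]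

theorem vecMulVec_mul_vecMulVec_of_orthonormal {ι : Type*} [DecidableEq ι] {u : ι → m → R}
    (hu : ∀ i j, star (u i) ⬝ᵥ u j = if i = j then 1 else 0) (i k : ι) :
    vecMulVec (u i) (star (u i)) * vecMulVec (u k) (star (u k))
      = if i = k then vecMulVec (u i) (star (u i)) else 0 := by
  rw [vecMulVec_mul_vecMulVec, hu]
  split_ifs with h
  · rw [one_smul, h]
  · rw [zero_smul, vecMulVec_zero]

theorem sum_vecMulVec_star_eq_one_of_orthonormal [DecidableEq m] {u : m → m → R}
    (hu : ∀ i j, star (u i) ⬝ᵥ u j = if i = j then 1 else 0) :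
    ∑ i, vecMulVec (u i) (star (u i)) = 1 := by
  -- the `u i` are the columns of `W`; a one-sided inverse of a square matrix is two-sided
  set W : Matrix m m R := of fun k i => u i k
  have hW : Wᴴ * W = 1 := by
    ext i j
    simpa [W, mul_apply, one_apply, dotProduct] using hu i j
  have : W * Wᴴ = 1 := mul_eq_one_comm.mp hW
  ext k l
  simpa [W, mul_apply, one_apply, Matrix.sum_apply, vecMulVec_apply] using congr_fun₂ this k l

end RankOneProjections

theorem divided_difference_mul_sub {𝕜 : Type*} [Field 𝕜] [DecidableEq 𝕜] {f d : 𝕜 → 𝕜}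
    {f1 : 𝕜 → 𝕜 → 𝕜} (hf1 : ∀ x y, f1 x y = if x = y then d x else (f x - f y) / (x - y))
    (x y : 𝕜) : f1 x y * (x - y) = f x - f y := by
  rw [hf1]
  split_ifs with h
  · rw [h, sub_self, sub_self, mul_zero]
  · exact div_mul_cancel₀ _ (sub_ne_zero.mpr h)

theorem dti_perturbation_formula_general {n : ℕ} (u v : Fin n → Fin n → ℂ) (lam mu : Fin n → ℝ)
    (hu : ∀ i j, star (u i) ⬝ᵥ u j = if i = j then 1 else 0)
    (hv : ∀ i j, star (v i) ⬝ᵥ v j = if i = j then 1 else 0)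
    (A B : Matrix (Fin n) (Fin n) ℂ)
    (hAdec : A = ∑ i, (lam i : ℂ) • vecMulVec (u i) (star (u i)))
    (hBdec : B = ∑ j, (mu j : ℂ) • vecMulVec (v j) (star (v j)))
    (f : ℝ → ℝ)
    (f1 : ℝ → ℝ → ℝ)
    (hf1 : ∀ x y, f1 x y = if x = y then deriv f x else (f x - f y) / (x - y)) :
    (∑ i, (f (lam i) : ℂ) • vecMulVec (u i) (star (u i)))
      - (∑ j, (f (mu j) : ℂ) • vecMulVec (v j) (star (v j)))
    = ∑ i, ∑ j, (f1 (lam i) (mu j) : ℂ) •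
        (vecMulVec (u i) (star (u i)) * (A - B) * vecMulVec (v j) (star (v j))) := by
  have hdiv (x y : ℝ) : (f1 x y : ℂ) * ((x : ℂ) - y) = f x - f y := by
    exact_mod_cast divided_difference_mul_sub hf1 x y
  rw [← sum_sum_sub_smul_mul_of_sum_eq_one (sum_vecMulVec_star_eq_one_of_orthonormal hu)
    (sum_vecMulVec_star_eq_one_of_orthonormal hv)]
  refine Finset.sum_congr rfl fun i _ => Finset.sum_congr rfl fun j _ => ?_
  rw [hAdec, hBdec, mul_sub_mul_of_orthogonal (vecMulVec_mul_vecMulVec_of_orthonormal hu)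
    (vecMulVec_mul_vecMulVec_of_orthonormal hv), smul_smul, hdiv]

/-- Perturbation formula `f(A) - f(B) = T_{A,B,f^{[1]}}(A - B)`. -/
theorem dti_perturbation_formula {n : ℕ} (u v : Fin n → Fin n → ℂ) (lam mu : Fin n → ℝ)
    (hu : ∀ i j, star (u i) ⬝ᵥ u j = if i = j then 1 else 0)
    (hv : ∀ i j, star (v i) ⬝ᵥ v j = if i = j then 1 else 0)
    (A B : Matrix (Fin n) (Fin n) ℂ)
    (hAH : A.IsHermitian) (hBH : B.IsHermitian)
    (hAdec : A = ∑ i, (lam i : ℂ) • vecMulVec (u i) (star (u i)))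
    (hBdec : B = ∑ j, (mu j : ℂ) • vecMulVec (v j) (star (v j)))
    (f : ℝ → ℝ) (hf : Differentiable ℝ f)
    (f1 : ℝ → ℝ → ℝ)
    (hf1 : ∀ x y, f1 x y = if x = y then deriv f x else (f x - f y) / (x - y)) :
    (∑ i, (f (lam i) : ℂ) • vecMulVec (u i) (star (u i)))
      - (∑ j, (f (mu j) : ℂ) • vecMulVec (v j) (star (v j)))
    = ∑ i, ∑ j, (f1 (lam i) (mu j) : ℂ) •
        (vecMulVec (u i) (star (u i)) * (A - B) * vecMulVec (v j) (star (v j))) :=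
  dti_perturbation_formula_general u v lam mu hu hv A B hAdec hBdec f f1 hf1
end

section
/- Let f : ℝ → ℝ be differentiable and f^{[1]} its first divided difference. For Hermitian matrices A = Σᵢ λᵢ Pᵢ and B = Σⱼ μⱼ Qⱼ (spectral decompositions) and any matrix D, the quasi-commutator perturbation formula holds: D f(A) − f(B) D = T_{B,A,f^{[1]}}(D A − B D), where T_{B,A,ψ}(X) = Σⱼ Σᵢ ψ(μⱼ, λᵢ) Qⱼ X Pᵢ; that is, D f(A) − f(B) D = Σᵢ Σⱼ f^{[1]}(μⱼ, λᵢ) Qⱼ (D A − B D) Pᵢ. -/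
open Matrix BigOperators

lemma projMul {n : ℕ} (u : Fin n → Fin n → ℂ)
    (hu : ∀ i j, star (u i) ⬝ᵥ u j = if i = j then 1 else 0) (i j : Fin n) :
    vecMulVec (u i) (star (u i)) * vecMulVec (u j) (star (u j))
      = if i = j then vecMulVec (u j) (star (u j)) else 0 := by
  have h := hu i j
  ext a b
  simp only [mul_apply, vecMulVec_apply, Pi.star_apply]
  have : ∑ k, u i a * star (u i k) * (u j k * star (u j b))
      = (u i a * star (u j b)) * (star (u i) ⬝ᵥ u j) := by
    rw [dotProduct, Finset.mul_sum]
    apply Finset.sum_congr rfl; intro k _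
    simp [Pi.star_apply]; ring
  rw [this, h]
  by_cases hij : i = j <;> simp [hij, vecMulVec_apply]

lemma projSum {n : ℕ} (u : Fin n → Fin n → ℂ)
    (hu : ∀ i j, star (u i) ⬝ᵥ u j = if i = j then 1 else 0) :
    ∑ i, vecMulVec (u i) (star (u i)) = (1 : Matrix (Fin n) (Fin n) ℂ) := by
  set U : Matrix (Fin n) (Fin n) ℂ := Matrix.of u with hU
  have h1 : U * Uᴴ = 1 := by
    ext i j
    have h := hu j i
    rw [dotProduct] at h
    simp only [mul_apply, conjTranspose_apply, one_apply]
    rw [show (if i = j then (1:ℂ) else 0) = if j = i then 1 else 0 from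
      if_congr (Iff.intro Eq.symm Eq.symm) rfl rfl]
    rw [← h]
    apply Finset.sum_congr rfl; intro k _
    simp [hU, Pi.star_apply]; ring
  have h2 : Uᴴ * U = 1 := mul_eq_one_comm.mp h1
  ext a b
  have h := congrArg (fun M => M b a) h2
  simp only [mul_apply, conjTranspose_apply, one_apply] at h
  simp only [Matrix.sum_apply, vecMulVec_apply, Pi.star_apply, one_apply]
  rw [show (if a = b then (1:ℂ) else 0) = if b = a then 1 else 0 from
    if_congr (Iff.intro Eq.symm Eq.symm) rfl rfl]
  rw [← h]
  apply Finset.sum_congr rfl; intro k _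
  simp [hU]; ring

/-- Quasi-commutator perturbation formula
`D f(A) - f(B) D = Σᵢⱼ f^{[1]}(μⱼ, λᵢ) Qⱼ (DA - BD) Pᵢ`. -/
theorem dti_quasi_commutator_perturbation {n : ℕ} (u v : Fin n → Fin n → ℂ)
    (lam mu : Fin n → ℝ)
    (hu : ∀ i j, star (u i) ⬝ᵥ u j = if i = j then 1 else 0)
    (hv : ∀ i j, star (v i) ⬝ᵥ v j = if i = j then 1 else 0)
    (A B D : Matrix (Fin n) (Fin n) ℂ)
    (hAH : A.IsHermitian) (hBH : B.IsHermitian)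
    (hAdec : A = ∑ i, (lam i : ℂ) • vecMulVec (u i) (star (u i)))
    (hBdec : B = ∑ j, (mu j : ℂ) • vecMulVec (v j) (star (v j)))
    (f : ℝ → ℝ) (hf : Differentiable ℝ f)
    (f1 : ℝ → ℝ → ℝ)
    (hf1 : ∀ x y, f1 x y = if x = y then deriv f x else (f x - f y) / (x - y)) :
    D * (∑ i, (f (lam i) : ℂ) • vecMulVec (u i) (star (u i)))
      - (∑ j, (f (mu j) : ℂ) • vecMulVec (v j) (star (v j))) * D
    = ∑ i, ∑ j, (f1 (mu j) (lam i) : ℂ) •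
        (vecMulVec (v j) (star (v j)) * (D * A - B * D) * vecMulVec (u i) (star (u i))) := by
  set P : Fin n → Matrix (Fin n) (Fin n) ℂ := fun i => vecMulVec (u i) (star (u i)) with hP
  set Q : Fin n → Matrix (Fin n) (Fin n) ℂ := fun j => vecMulVec (v j) (star (v j)) with hQ
  have hPmul := projMul u hu
  have hQmul := projMul v hv
  have hPsum := projSum u hu
  have hQsum := projSum v hv
  have hAP : ∀ i, A * P i = (lam i : ℂ) • P i := by
    intro i
    rw [hAdec, Finset.sum_mul]
    simp only [smul_mul_assoc, hP, hPmul]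
    simp [Finset.sum_ite_eq', smul_ite]
  have hQB : ∀ j, Q j * B = (mu j : ℂ) • Q j := by
    intro j
    rw [hBdec, Finset.mul_sum]
    simp only [mul_smul_comm, hQ, hQmul]
    simp [Finset.sum_ite_eq, smul_ite]
  have key : ∀ i j, Q j * (D * A - B * D) * P i
      = ((lam i : ℂ) - (mu j : ℂ)) • (Q j * D * P i) := by
    intro i j
    have e : Q j * (D * A - B * D) * P i
        = Q j * D * (A * P i) - (Q j * B) * (D * P i) := by
      noncomm_ring
    rw [e, hAP, hQB, mul_smul_comm, smul_mul_assoc, sub_smul, mul_assoc]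
  have scal : ∀ i j, (f1 (mu j) (lam i) : ℂ) * ((lam i : ℂ) - (mu j : ℂ))
      = (f (lam i) : ℂ) - (f (mu j) : ℂ) := by
    intro i j
    have e : f1 (mu j) (lam i) * (lam i - mu j) = f (lam i) - f (mu j) := by
      by_cases h : mu j = lam i
      · simp [hf1, h]
      · have h2 : lam i - mu j ≠ 0 := sub_ne_zero.mpr (fun h' => h h'.symm)
        have h3 : mu j - lam i ≠ 0 := fun h' => h2 (by linarith [sub_eq_zero.mp h'])
        rw [hf1, if_neg h, div_mul_eq_mul_div, div_eq_iff h3]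
        ring
    calc (f1 (mu j) (lam i) : ℂ) * ((lam i : ℂ) - (mu j : ℂ))
        = ((f1 (mu j) (lam i) * (lam i - mu j) : ℝ) : ℂ) := by push_cast; ring
      _ = (f (lam i) : ℂ) - (f (mu j) : ℂ) := by rw [e]; push_cast; ring
  have step : ∀ i j, (f1 (mu j) (lam i) : ℂ) • (Q j * (D * A - B * D) * P i)
      = (f (lam i) : ℂ) • (Q j * D * P i) - (f (mu j) : ℂ) • (Q j * D * P i) := by
    intro i j
    rw [key, smul_smul, scal, sub_smul]
  have e1 : D * (∑ i, (f (lam i) : ℂ) • P i)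
      = ∑ i, ∑ j, (f (lam i) : ℂ) • (Q j * D * P i) := by
    rw [Finset.sum_comm]
    calc D * (∑ i, (f (lam i) : ℂ) • P i)
        = (∑ j, Q j) * (D * ∑ i, (f (lam i) : ℂ) • P i) := by rw [hQsum, one_mul]
      _ = ∑ j, ∑ i, (f (lam i) : ℂ) • (Q j * D * P i) := by
          rw [Finset.sum_mul]
          apply Finset.sum_congr rfl; intro j _
          rw [Finset.mul_sum, Finset.mul_sum]
          apply Finset.sum_congr rfl; intro i _
          rw [mul_smul_comm, mul_smul_comm, mul_assoc]
  have e2 : (∑ j, (f (mu j) : ℂ) • Q j) * D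
      = ∑ i, ∑ j, (f (mu j) : ℂ) • (Q j * D * P i) := by
    rw [Finset.sum_comm]
    calc (∑ j, (f (mu j) : ℂ) • Q j) * D
        = ((∑ j, (f (mu j) : ℂ) • Q j) * D) * ∑ i, P i := by rw [hPsum, mul_one]
      _ = ∑ j, ∑ i, (f (mu j) : ℂ) • (Q j * D * P i) := by
          rw [Finset.sum_mul, Finset.sum_mul]
          apply Finset.sum_congr rfl; intro j _
          rw [Finset.mul_sum]
          apply Finset.sum_congr rfl; intro i _
          rw [smul_mul_assoc, smul_mul_assoc]
  calc D * (∑ i, (f (lam i) : ℂ) • P i) - (∑ j, (f (mu j) : ℂ) • Q j) * D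
      = ∑ i, ∑ j, ((f (lam i) : ℂ) • (Q j * D * P i) - (f (mu j) : ℂ) • (Q j * D * P i)) := by
        rw [e1, e2, ← Finset.sum_sub_distrib]
        apply Finset.sum_congr rfl; intro i _
        rw [← Finset.sum_sub_distrib]
    _ = ∑ i, ∑ j, (f1 (mu j) (lam i) : ℂ) • (Q j * (D * A - B * D) * P i) := by
        simp only [step]
end

section
/- Let A, B be random Hermitian n×n matrices, D a fixed (or random) n×n matrix, and f : ℝ → ℝ differentiable with divided difference f^{[1]} bounded by Ω on the spectra of A and B. Then for any unitarily invariant norm ‖·‖ and any θ > 0, Pr(‖D f(A) − f(B) D‖ ≥ θ) ≤ (n² Ω / θ) · E‖D A − B D‖. -/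
open Matrix BigOperators MeasureTheory ProbabilityTheory

/-!
Compressing the quasi-commutator by the spectral projections `Pᵢ = uᵢuᵢ*` of `A` and
`Qⱼ = vⱼvⱼ*` of `B` gives `Qⱼ (D f(A) - f(B) D) Pᵢ = f^[1](λᵢ, μⱼ) • Qⱼ (DA - BD) Pᵢ`, and the
`n²` blocks sum back to the whole matrix. A unitarily invariant seminorm does not increase under
multiplication by an orthogonal projection, so `‖D f(A) - f(B) D‖ ≤ n² Ω ‖DA - BD‖` for every
outcome, and Markov's inequality finishes.
-/

section Projections

variable {m R : Type*} [Fintype m] [CommRing R] [StarRing R]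

theorem isStarProjection_vecMulVec_star {a : m → R} (ha : star a ⬝ᵥ a = 1) :
    IsStarProjection (vecMulVec a (star a)) where
  isIdempotentElem := by
    rw [IsIdempotentElem, vecMulVec_mul_vecMulVec, ha, one_smul]
  isSelfAdjoint := by
    rw [IsSelfAdjoint, star_eq_conjTranspose, conjTranspose_vecMulVec, star_star]

variable [DecidableEq m] {u : Matrix m m R}

theorem vecMulVec_star_mul_vecMulVec_star
    (hu : ∀ i j, star (u i) ⬝ᵥ u j = if i = j then 1 else 0) (k i : m) :
    vecMulVec (u k) (star (u k)) * vecMulVec (u i) (star (u i)) =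
      if k = i then vecMulVec (u i) (star (u i)) else 0 := by
  rw [vecMulVec_mul_vecMulVec, hu]
  split_ifs with h
  · rw [h, one_smul]
  · rw [zero_smul, vecMulVec_zero]

theorem sum_vecMulVec_star_eq_one
    (hu : ∀ i j, star (u i) ⬝ᵥ u j = if i = j then 1 else 0) :
    ∑ i, vecMulVec (u i) (star (u i)) = 1 := by
  have hunit : u * uᴴ = 1 := by
    ext i j
    have := hu j i
    simp only [dotProduct, Pi.star_apply] at this
    simp only [mul_apply, conjTranspose_apply, one_apply, mul_comm (u i _), this, eq_comm]
  have hunit' : uᴴ * u = 1 := mul_eq_one_comm.mp hunit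
  ext k l
  have := congr_fun (congr_fun hunit' l) k
  simp only [mul_apply, conjTranspose_apply, one_apply] at this
  simp only [Matrix.sum_apply, vecMulVec_apply, Pi.star_apply, one_apply]
  calc ∑ c, u c k * star (u c l) = ∑ c, star (u c l) * u c k :=
        Finset.sum_congr rfl fun _ _ => mul_comm _ _
    _ = _ := by rw [this]; exact if_congr eq_comm rfl rfl

/-- For orthonormal rows `u i` this is the Hermitian matrix with eigenpairs `(c i, u i)`, so
`spectralSum u (f ∘ c)` is `f` of `spectralSum u c` by the functional calculus. -/
def spectralSum (u : Matrix m m R) (c : m → R) : Matrix m m R :=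
  ∑ i, c i • vecMulVec (u i) (star (u i))

theorem spectralSum_mul_vecMulVec_star
    (hu : ∀ i j, star (u i) ⬝ᵥ u j = if i = j then 1 else 0) (c : m → R) (i : m) :
    spectralSum u c * vecMulVec (u i) (star (u i)) = c i • vecMulVec (u i) (star (u i)) := by
  simp only [spectralSum, Finset.sum_mul, smul_mul_assoc, vecMulVec_star_mul_vecMulVec_star hu,
    smul_ite, smul_zero, Finset.sum_ite_eq', Finset.mem_univ, if_true]

theorem vecMulVec_star_mul_spectralSum
    (hu : ∀ i j, star (u i) ⬝ᵥ u j = if i = j then 1 else 0) (c : m → R) (j : m) :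
    vecMulVec (u j) (star (u j)) * spectralSum u c = c j • vecMulVec (u j) (star (u j)) := by
  simp only [spectralSum, Finset.mul_sum, mul_smul_comm, vecMulVec_star_mul_vecMulVec_star hu,
    smul_ite, smul_zero, Finset.sum_ite_eq, Finset.mem_univ, if_true]

theorem vecMulVec_star_mul_quasiCommutator_mul {v : Matrix m m R}
    (hu : ∀ i j, star (u i) ⬝ᵥ u j = if i = j then 1 else 0)
    (hv : ∀ i j, star (v i) ⬝ᵥ v j = if i = j then 1 else 0) (D : Matrix m m R)
    (c d : m → R) (i j : m) :
    vecMulVec (v j) (star (v j)) * (D * spectralSum u c - spectralSum v d * D) *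
        vecMulVec (u i) (star (u i)) =
      (c i - d j) • (vecMulVec (v j) (star (v j)) * D * vecMulVec (u i) (star (u i))) := by
  rw [mul_sub, sub_mul, sub_smul, ← mul_assoc, mul_assoc _ (spectralSum u c),
    spectralSum_mul_vecMulVec_star hu, ← mul_assoc, vecMulVec_star_mul_spectralSum hv,
    mul_smul_comm, smul_mul_assoc, smul_mul_assoc]

end Projections

namespace Seminorm

variable {m 𝕜 : Type*} [Fintype m] [DecidableEq m] [RCLike 𝕜]

def IsUnitarilyInvariant (p : Seminorm 𝕜 (Matrix m m 𝕜)) : Prop :=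
  ∀ U ∈ unitaryGroup m 𝕜, ∀ Y, p (U * Y) = p Y ∧ p (Y * U) = p Y

namespace IsUnitarilyInvariant

variable {p : Seminorm 𝕜 (Matrix m m 𝕜)} {P : Matrix m m 𝕜}

/-- `P` is the average of `1` and the unitary reflection `2P - 1`. -/
theorem apply_starProjection_mul_le (hp : p.IsUnitarilyInvariant) (hP : IsStarProjection P)
    (Y : Matrix m m 𝕜) : p (P * Y) ≤ p Y := by
  have hU := hP.two_mul_sub_one_mem_unitary
  have hPY : P * Y = (2⁻¹ : 𝕜) • ((2 * P - 1) * Y + Y) := by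
    rw [sub_mul, one_mul, sub_add_cancel, two_mul, add_mul, ← two_smul 𝕜, smul_smul,
      inv_mul_cancel₀ two_ne_zero, one_smul]
  calc p (P * Y) = 2⁻¹ * p ((2 * P - 1) * Y + Y) := by
        rw [hPY, map_smul_eq_mul, norm_inv, RCLike.norm_two]
    _ ≤ 2⁻¹ * (p ((2 * P - 1) * Y) + p Y) := by gcongr; exact map_add_le_add p _ _
    _ = p Y := by rw [(hp _ hU Y).1]; ring

theorem apply_mul_starProjection_le (hp : p.IsUnitarilyInvariant) (hP : IsStarProjection P)
    (Y : Matrix m m 𝕜) : p (Y * P) ≤ p Y := by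
  have hU := hP.two_mul_sub_one_mem_unitary
  have hYP : Y * P = (2⁻¹ : 𝕜) • (Y * (2 * P - 1) + Y) := by
    rw [mul_sub, mul_one, sub_add_cancel, two_mul, mul_add, ← two_smul 𝕜, smul_smul,
      inv_mul_cancel₀ two_ne_zero, one_smul]
  calc p (Y * P) = 2⁻¹ * p (Y * (2 * P - 1) + Y) := by
        rw [hYP, map_smul_eq_mul, norm_inv, RCLike.norm_two]
    _ ≤ 2⁻¹ * (p (Y * (2 * P - 1)) + p Y) := by gcongr; exact map_add_le_add p _ _
    _ = p Y := by rw [(hp _ hU Y).2]; ring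

theorem apply_quasiCommutator_le (hp : p.IsUnitarilyInvariant) {u v : Matrix m m 𝕜}
    (hu : ∀ i j, star (u i) ⬝ᵥ u j = if i = j then 1 else 0)
    (hv : ∀ i j, star (v i) ⬝ᵥ v j = if i = j then 1 else 0) (D : Matrix m m 𝕜)
    {a b c d : m → 𝕜} {g : m → m → 𝕜} {C : ℝ} (hg : ∀ i j, c i - d j = g i j * (a i - b j))
    (hC : ∀ i j, ‖g i j‖ ≤ C) :
    p (D * spectralSum u c - spectralSum v d * D) ≤
      (Fintype.card m : ℝ) ^ 2 * C * p (D * spectralSum u a - spectralSum v b * D) := by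
  set P : m → Matrix m m 𝕜 := fun i => vecMulVec (u i) (star (u i))
  set Q : m → Matrix m m 𝕜 := fun j => vecMulVec (v j) (star (v j))
  set X := D * spectralSum u a - spectralSum v b * D
  have hpinch : ∀ Y, ∑ j, ∑ i, Q j * Y * P i = Y := fun Y => by
    simp only [P, Q, ← Finset.mul_sum, ← Finset.sum_mul, sum_vecMulVec_star_eq_one hu,
      sum_vecMulVec_star_eq_one hv, one_mul, mul_one]
  have hblock : ∀ i j, Q j * (D * spectralSum u c - spectralSum v d * D) * P i =
      g i j • (Q j * X * P i) := fun i j => by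
    rw [vecMulVec_star_mul_quasiCommutator_mul hu hv, vecMulVec_star_mul_quasiCommutator_mul hu hv,
      hg, smul_smul]
  have hsum_le : ∀ {ι : Type _} (s : Finset ι) (Y : ι → Matrix m m 𝕜),
      p (∑ k ∈ s, Y k) ≤ ∑ k ∈ s, p (Y k) :=
    fun s Y => Finset.le_sum_of_subadditive p (map_zero p).le (map_add_le_add p) s Y
  calc p (D * spectralSum u c - spectralSum v d * D)
      = p (∑ j, ∑ i, g i j • (Q j * X * P i)) := by rw [← hpinch (D * _ - _)]; simp_rw [hblock]
    _ ≤ ∑ j, ∑ i, p (g i j • (Q j * X * P i)) :=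
        (hsum_le _ _).trans (Finset.sum_le_sum fun j _ => hsum_le _ _)
    _ ≤ ∑ j : m, ∑ i : m, C * p X := by
        gcongr with j _ i _
        rw [map_smul_eq_mul]
        have hQXP : p (Q j * X * P i) ≤ p X :=
          (hp.apply_mul_starProjection_le (isStarProjection_vecMulVec_star ((hu i i).trans
            (if_pos rfl))) _).trans (hp.apply_starProjection_mul_le
              (isStarProjection_vecMulVec_star ((hv j j).trans (if_pos rfl))) _)
        exact mul_le_mul (hC i j) hQXP (apply_nonneg p _) ((norm_nonneg _).trans (hC i j))
    _ = (Fintype.card m : ℝ) ^ 2 * C * p X := by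
        simp only [Finset.sum_const, Finset.card_univ, nsmul_eq_mul]
        ring

end IsUnitarilyInvariant

end Seminorm

theorem measureReal_ge_le_div_mul_integral_of_le_mul {α : Type*} [MeasurableSpace α]
    {μ : Measure α} {g h : α → ℝ} {c θ : ℝ} (hθ : 0 < θ) (hg : ∀ x, 0 ≤ g x)
    (hgh : ∀ x, g x ≤ c * h x) (hh : Integrable h μ) :
    μ.real {x | θ ≤ g x} ≤ c / θ * ∫ x, h x ∂μ := by
  have hch : Integrable (fun x => c * h x) μ := hh.const_mul c
  have hsub : μ.real {x | θ ≤ g x} ≤ μ.real {x | θ ≤ c * h x} :=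
    measureReal_mono (fun x hx => le_trans hx (hgh x)) (hch.measure_ge_lt_top hθ).ne
  have markov := mul_meas_ge_le_integral_of_nonneg
    (ae_of_all _ fun x => (hg x).trans (hgh x)) hch θ
  rw [integral_const_mul] at markov
  rw [div_mul_eq_mul_div, le_div_iff₀ hθ, mul_comm]
  exact (mul_le_mul_of_nonneg_left hsub hθ.le).trans markov

theorem random_quasi_commutator_tail_bound_general {n : ℕ} {Ω : Type*} [MeasureSpace Ω]
    (u v : Ω → Fin n → Fin n → ℂ) (lam mu : Ω → Fin n → ℝ)
    (hu : ∀ ω i j, star (u ω i) ⬝ᵥ u ω j = if i = j then 1 else 0)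
    (hv : ∀ ω i j, star (v ω i) ⬝ᵥ v ω j = if i = j then 1 else 0)
    (A B : Ω → Matrix (Fin n) (Fin n) ℂ) (D : Matrix (Fin n) (Fin n) ℂ)
    (hAdec : ∀ ω, A ω = ∑ i, (lam ω i : ℂ) • vecMulVec (u ω i) (star (u ω i)))
    (hBdec : ∀ ω, B ω = ∑ j, (mu ω j : ℂ) • vecMulVec (v ω j) (star (v ω j)))
    (f : ℝ → ℝ)
    (f1 : ℝ → ℝ → ℝ)
    (hf1 : ∀ x y, f1 x y = if x = y then deriv f x else (f x - f y) / (x - y))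
    (Ω₀ : ℝ)
    (hbound : ∀ ω i j, |f1 (lam ω i) (mu ω j)| ≤ Ω₀)
    (fA fB : Ω → Matrix (Fin n) (Fin n) ℂ)
    (hfA : ∀ ω, fA ω = ∑ i, (f (lam ω i) : ℂ) • vecMulVec (u ω i) (star (u ω i)))
    (hfB : ∀ ω, fB ω = ∑ j, (f (mu ω j) : ℂ) • vecMulVec (v ω j) (star (v ω j)))
    (N : Matrix (Fin n) (Fin n) ℂ → ℝ)
    (hN_add : ∀ Y Z, N (Y + Z) ≤ N Y + N Z)
    (hN_smul : ∀ (c : ℂ) Y, N (c • Y) = ‖c‖ * N Y)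
    (hN_unitary : ∀ U ∈ Matrix.unitaryGroup (Fin n) ℂ, ∀ Y,
      N (U * Y) = N Y ∧ N (Y * U) = N Y)
    (hint : Integrable (fun ω => N (D * A ω - B ω * D)) ℙ)
    (θ : ℝ) (hθ : 0 < θ) :
    (ℙ {ω | θ ≤ N (D * fA ω - fB ω * D)}).toReal
      ≤ ((n : ℝ) ^ 2 * Ω₀ / θ) * ∫ ω, N (D * A ω - B ω * D) ∂ℙ := by
  let p : Seminorm ℂ (Matrix (Fin n) (Fin n) ℂ) := Seminorm.of N hN_add hN_smul
  have hdiff : ∀ x y, f x - f y = f1 x y * (x - y) := fun x y => by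
    rw [hf1]
    split_ifs with hxy
    · rw [hxy, sub_self, sub_self, mul_zero]
    · rw [div_mul_cancel₀ _ (sub_ne_zero.mpr hxy)]
  have hpointwise : ∀ ω, N (D * fA ω - fB ω * D) ≤ (n : ℝ) ^ 2 * Ω₀ * N (D * A ω - B ω * D) :=
    fun ω => by
      have := Seminorm.IsUnitarilyInvariant.apply_quasiCommutator_le (p := p) hN_unitary
        (hu ω) (hv ω) D (a := fun i => lam ω i) (b := fun j => mu ω j)
        (c := fun i => f (lam ω i)) (d := fun j => f (mu ω j))
        (g := fun i j => f1 (lam ω i) (mu ω j))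
        (fun i j => by exact_mod_cast hdiff (lam ω i) (mu ω j))
        (fun i j => by rw [Complex.norm_real, Real.norm_eq_abs]; exact hbound ω i j)
      rw [Fintype.card_fin] at this
      rw [hfA, hfB, hAdec, hBdec]
      exact this
  exact measureReal_ge_le_div_mul_integral_of_le_mul hθ (fun ω => apply_nonneg p _) hpointwise hint

/-- Quasi-commutator tail bound
`Pr(‖D f(A) − f(B) D‖ ≥ θ) ≤ (n²Ω/θ)·E‖DA − BD‖`. -/
theorem random_quasi_commutator_tail_bound {n : ℕ} {Ω : Type*} [MeasureSpace Ω]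
    [IsProbabilityMeasure (ℙ : Measure Ω)]
    (u v : Ω → Fin n → Fin n → ℂ) (lam mu : Ω → Fin n → ℝ)
    (hu : ∀ ω i j, star (u ω i) ⬝ᵥ u ω j = if i = j then 1 else 0)
    (hv : ∀ ω i j, star (v ω i) ⬝ᵥ v ω j = if i = j then 1 else 0)
    (A B : Ω → Matrix (Fin n) (Fin n) ℂ) (D : Matrix (Fin n) (Fin n) ℂ)
    (hAH : ∀ ω, (A ω).IsHermitian) (hBH : ∀ ω, (B ω).IsHermitian)
    (hAdec : ∀ ω, A ω = ∑ i, (lam ω i : ℂ) • vecMulVec (u ω i) (star (u ω i)))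
    (hBdec : ∀ ω, B ω = ∑ j, (mu ω j : ℂ) • vecMulVec (v ω j) (star (v ω j)))
    (f : ℝ → ℝ) (hf : Differentiable ℝ f)
    (f1 : ℝ → ℝ → ℝ)
    (hf1 : ∀ x y, f1 x y = if x = y then deriv f x else (f x - f y) / (x - y))
    (Ω₀ : ℝ)
    (hbound : ∀ ω i j, |f1 (lam ω i) (mu ω j)| ≤ Ω₀)
    (fA fB : Ω → Matrix (Fin n) (Fin n) ℂ)
    (hfA : ∀ ω, fA ω = ∑ i, (f (lam ω i) : ℂ) • vecMulVec (u ω i) (star (u ω i)))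
    (hfB : ∀ ω, fB ω = ∑ j, (f (mu ω j) : ℂ) • vecMulVec (v ω j) (star (v ω j)))
    (N : Matrix (Fin n) (Fin n) ℂ → ℝ)
    (hN_nonneg : ∀ Y, 0 ≤ N Y)
    (hN_add : ∀ Y Z, N (Y + Z) ≤ N Y + N Z)
    (hN_smul : ∀ (c : ℂ) Y, N (c • Y) = ‖c‖ * N Y)
    (hN_unitary : ∀ U ∈ Matrix.unitaryGroup (Fin n) ℂ, ∀ Y,
      N (U * Y) = N Y ∧ N (Y * U) = N Y)
    (hmeas : Measurable fun ω => N (D * fA ω - fB ω * D))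
    (hint : Integrable (fun ω => N (D * A ω - B ω * D)) ℙ)
    (θ : ℝ) (hθ : 0 < θ) :
    (ℙ {ω | θ ≤ N (D * fA ω - fB ω * D)}).toReal
      ≤ ((n : ℝ) ^ 2 * Ω₀ / θ) * ∫ ω, N (D * A ω - B ω * D) ∂ℙ :=
  random_quasi_commutator_tail_bound_general u v lam mu hu hv A B D hAdec hBdec f f1 hf1 Ω₀ hbound
    fA fB hfA hfB N hN_add hN_smul hN_unitary hint θ hθ
end
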